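/- Let J ⊆ J₀, vJ ∈ Seq(J;k), and let vI and vI′ be two unfoldings of vJ. Then Sym_π(A_{vI}) = Sym_π(A_{vI′}) in ℂ(t), and for every s ∈ {1,…,n}, Sym_π(B_{vI}(·; z_s)) = Sym_π(B_{vI′}(·; z_s)) in ℂ(t). -/

import Mathlib

/- STATEMENT 10.
`π : C → J₀` is a surjective map of finite sets with π-invariant exponents; the group
`Σ_π = {σ ∈ Perm(C) | π∘σ = π}` acts on `ℂ(t)` by permuting the variables, and
`Sym_π = ∑_{σ∈Σ_π} σ`.  For `vJ ∈ Seq(J;k)` (a list over `J₀` in which every entry `j`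
occurs exactly `k_j = card(π⁻¹(j))` times) and two unfoldings `vI`, `vI′` of `vJ`
(nodup lists in `C` with `π ∘ vI = vJ = π ∘ vI′`), one has
`Sym_π(A_{vI}) = Sym_π(A_{vI′})` and `Sym_π(B_{vI}(·;z_s)) = Sym_π(B_{vI′}(·;z_s))` for all `s`. -/

noncomputable section

abbrev FF (C : Type) := FractionRing (MvPolynomial C ℂ)

def tv {C : Type} (i : C) : FF C := algebraMap (MvPolynomial C ℂ) (FF C) (MvPolynomial.X i)

def cc {C : Type} (w : ℂ) : FF C := algebraMap (MvPolynomial C ℂ) (FF C) (MvPolynomial.C w)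

/-- `A_{vI}(t)`. -/
def Afun {C : Type} (a : C → C → ℂ) (l : List C) : FF C :=
  ∏ p : Fin l.length, if p.val = 0 then 1 else
    ∑ q : Fin l.length, if q < p then
      cc (a (l.get p) (l.get q)) / (tv (l.get p) - tv (l.get q)) else 0

/-- `B_{vI}(t; z_s)`. -/
def Bfun {C : Type} (a : C → C → ℂ) (b : C → ℂ) (z : ℂ) (l : List C) : FF C :=
  ∏ p : Fin l.length,
    (cc (b (l.get p)) / (tv (l.get p) - cc z)
      + ∑ q : Fin l.length, if q < p then
          cc (a (l.get p) (l.get q)) / (tv (l.get p) - tv (l.get q)) else 0)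

/-- The field automorphism of `ℂ(t)` permuting the variables `t_i` by `σ`. -/
def permF {C : Type} (σ : Equiv.Perm C) : FF C ≃+* FF C :=
  IsFractionRing.ringEquivOfRingEquiv (MvPolynomial.renameEquiv ℂ σ).toRingEquiv

/-- The subgroup `Σ_π ⊆ Perm(C)` of permutations preserving the fibers of `π`, as a finset. -/
def SigmaPi {C J₀ : Type} [Fintype C] [DecidableEq C] [DecidableEq J₀] (π : C → J₀) :
    Finset (Equiv.Perm C) :=
  Finset.univ.filter fun σ => ∀ i, π (σ i) = π i

/-- `Sym_π = ∑_{σ ∈ Σ_π} σ`, applied to `f ∈ ℂ(t)`. -/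
def SymPi {C J₀ : Type} [Fintype C] [DecidableEq C] [DecidableEq J₀] (π : C → J₀)
    (f : FF C) : FF C :=
  ∑ σ ∈ SigmaPi π, permF σ f

/-! Two unfoldings of the same sequence differ by a fiber-preserving permutation `σ`, built one
transposition at a time. Since the exponents are `π`-invariant, the substitution `t ↦ t ∘ σ`
carries `A_{vI}` and `B_{vI}` to `A_{σ vI}` and `B_{σ vI}`, and `Sym_π` absorbs it because `σ ∈ Σ_π`. -/

open MvPolynomial

theorem List.exists_perm_map_eq_of_map_eq {α β : Type*} [DecidableEq α] (π : α → β) :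
    ∀ {l l' : List α}, l.Nodup → l'.Nodup → l.map π = l'.map π →
      ∃ σ : Equiv.Perm α, (∀ i, π (σ i) = π i) ∧ l.map σ = l'
  | [], [], _, _, _ => ⟨1, fun _ => rfl, rfl⟩
  | x :: t, x' :: t', hl, hl', h => by
    rw [List.nodup_cons] at hl hl'
    simp only [List.map_cons, List.cons.injEq] at h
    obtain ⟨τ, hτπ, hτ⟩ := exists_perm_map_eq_of_map_eq π hl.2 hl'.2 h.2
    refine ⟨Equiv.swap (τ x) x' * τ, fun i => ?_, ?_⟩
    · have hswap : π (τ x) = π x' := (hτπ x).trans h.1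
      rw [Equiv.Perm.mul_apply, ← hτπ i]
      rcases eq_or_ne (τ i) (τ x) with hi | hi
      · rw [hi, Equiv.swap_apply_left, hswap]
      rcases eq_or_ne (τ i) x' with hi' | hi'
      · rw [hi', Equiv.swap_apply_right, hswap]
      · rw [Equiv.swap_apply_of_ne_of_ne hi hi']
    · rw [List.map_cons, Equiv.Perm.mul_apply, Equiv.swap_apply_left, ← hτ]
      congr 1
      refine List.map_congr_left fun y hy => ?_
      rw [Equiv.Perm.mul_apply]
      refine Equiv.swap_apply_of_ne_of_ne ?_ ?_
      · exact fun hxy => hl.1 (τ.injective hxy ▸ hy)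
      · exact fun hyx => hl'.1 (hyx ▸ hτ ▸ List.mem_map_of_mem hy)

section Permutation

variable {C : Type} (σ : Equiv.Perm C)

theorem permF_algebraMap (p : MvPolynomial C ℂ) :
    permF σ (algebraMap (MvPolynomial C ℂ) (FF C) p) = algebraMap _ _ (rename σ p) := by
  simp [permF]

@[simp]
theorem permF_tv (i : C) : permF σ (tv i) = tv (σ i) := by
  simp [tv, permF_algebraMap]

@[simp]
theorem permF_cc (w : ℂ) : permF σ (cc w) = cc w := by
  simp [cc, permF_algebraMap]

theorem permF_mul (τ : Equiv.Perm C) : permF (τ * σ) = (permF σ).trans (permF τ) := by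
  rw [permF, permF, permF, Equiv.Perm.mul_def, ← renameEquiv_trans]
  exact IsFractionRing.ringEquivOfRingEquiv_comp _ _ _ _ _

variable {σ} {a : C → C → ℂ} (ha : ∀ i j, a (σ i) (σ j) = a i j)
include ha

theorem permF_Afun (l : List C) : permF σ (Afun a l) = Afun a (l.map σ) := by
  unfold Afun
  rw [map_prod]
  refine Fintype.prod_equiv (finCongr (l.length_map σ).symm) _ _ fun p => ?_
  simp only [apply_ite (permF σ), map_one, map_sum, map_zero, map_div₀, map_sub, permF_tv,
    permF_cc, finCongr_apply]
  refine if_ctx_congr Iff.rfl (fun _ => rfl) fun _ => ?_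
  refine Fintype.sum_equiv (finCongr (l.length_map σ).symm) _ _ fun q => ?_
  simp [ha]

theorem permF_Bfun {b : C → ℂ} (hb : ∀ i, b (σ i) = b i) (z : ℂ) (l : List C) :
    permF σ (Bfun a b z l) = Bfun a b z (l.map σ) := by
  unfold Bfun
  rw [map_prod]
  refine Fintype.prod_equiv (finCongr (l.length_map σ).symm) _ _ fun p => ?_
  simp only [map_add, map_sum, map_div₀, map_sub, permF_tv, permF_cc, finCongr_apply]
  congr 1
  · simp [hb]
  · refine Fintype.sum_equiv (finCongr (l.length_map σ).symm) _ _ fun q => ?_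
    simp [apply_ite (permF σ), ha]

end Permutation

theorem SymPi_permF {C J₀ : Type} [Fintype C] [DecidableEq C] [DecidableEq J₀] {π : C → J₀}
    {σ : Equiv.Perm C} (hσ : σ ∈ SigmaPi π) (f : FF C) : SymPi π (permF σ f) = SymPi π f := by
  have mem_mul : ∀ {τ ρ}, τ ∈ SigmaPi π → ρ ∈ SigmaPi π → τ * ρ ∈ SigmaPi π := by
    simp_all [SigmaPi]
  have hσinv : σ⁻¹ ∈ SigmaPi π := by
    simp only [SigmaPi, Finset.mem_filter, Finset.mem_univ, true_and] at hσ ⊢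
    exact fun i => by simpa using (hσ (σ⁻¹ i)).symm
  refine Finset.sum_nbij' (· * σ) (· * σ⁻¹) (fun τ hτ => mem_mul hτ hσ)
    (fun τ hτ => mem_mul hτ hσinv) (fun τ _ => by group) (fun τ _ => by group) fun τ _ => ?_
  rw [permF_mul]
  rfl

theorem statement10_general {C J₀ : Type} [Fintype C] [DecidableEq C] [DecidableEq J₀]
    (π : C → J₀)
    (n : ℕ) (z : Fin n → ℂ)
    (a : C → C → ℂ) (b : C → Fin n → ℂ)
    -- the exponents are π-invariant
    (hainv : ∀ i i' i'' i''', π i = π i'' → π i' = π i''' → a i i' = a i'' i''')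
    (hbinv : ∀ i i' s, π i = π i' → b i s = b i' s)
    (vJ : List J₀)
    -- two unfoldings of `vJ`
    (vI vI' : List C) (hnd : vI.Nodup) (hnd' : vI'.Nodup)
    (hunf : vI.map π = vJ) (hunf' : vI'.map π = vJ) :
    SymPi π (Afun a vI) = SymPi π (Afun a vI') ∧
      ∀ s : Fin n,
        SymPi π (Bfun a (fun i => b i s) (z s) vI)
          = SymPi π (Bfun a (fun i => b i s) (z s) vI') := by
  obtain ⟨σ, hσπ, rfl⟩ :=
    List.exists_perm_map_eq_of_map_eq π hnd hnd' (hunf.trans hunf'.symm)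
  have hσ : σ ∈ SigmaPi π := by simpa [SigmaPi] using hσπ
  have ha : ∀ i j, a (σ i) (σ j) = a i j := fun i j => hainv _ _ _ _ (hσπ i) (hσπ j)
  refine ⟨?_, fun s => ?_⟩
  · rw [← permF_Afun ha, SymPi_permF hσ]
  · rw [← permF_Bfun ha (fun i => hbinv _ _ s (hσπ i)), SymPi_permF hσ]

theorem statement10 {C J₀ : Type} [Fintype C] [DecidableEq C] [Fintype J₀] [DecidableEq J₀]
    (π : C → J₀) (hπ : Function.Surjective π)
    (n : ℕ) (hn : 1 ≤ n) (z : Fin n → ℂ) (hz : Function.Injective z)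
    (a : C → C → ℂ) (ha : ∀ i j, a i j = a j i) (b : C → Fin n → ℂ)
    -- the exponents are π-invariant
    (hainv : ∀ i i' i'' i''', π i = π i'' → π i' = π i''' → a i i' = a i'' i''')
    (hbinv : ∀ i i' s, π i = π i' → b i s = b i' s)
    -- `vJ ∈ Seq(J;k)`: each entry `j` of `vJ` occurs exactly `k_j = card(π⁻¹(j))` times
    (vJ : List J₀)
    (hcount : ∀ j ∈ vJ.toFinset,
      vJ.count j = (Finset.univ.filter fun i => π i = j).card)
    -- two unfoldings of `vJ`
    (vI vI' : List C) (hnd : vI.Nodup) (hnd' : vI'.Nodup)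
    (hunf : vI.map π = vJ) (hunf' : vI'.map π = vJ) :
    SymPi π (Afun a vI) = SymPi π (Afun a vI') ∧
      ∀ s : Fin n,
        SymPi π (Bfun a (fun i => b i s) (z s) vI)
          = SymPi π (Bfun a (fun i => b i s) (z s) vI') :=
  statement10_general π n z a b hainv hbinv vJ vI vI' hnd hnd' hunf hunf'

end
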